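/- arXiv:2307.03395 — 3 statements merged into one kernel-verified Lean document; each statement's English description precedes it below -/
import Mathlib

section
/- Let g : X → {0,1} and f : X × Y → {0,1} be functions, with f depending nontrivially on x (i.e., there exist x, x' ∈ X and y ∈ Y with f(x,y) ≠ f(x',y)). Let p be a probability distribution on Λ = {0,1} and define P(a,b|x,y) = Σ_λ p(λ)·[a = g(x) ⊕ λ]·[b = f(x,y) ⊕ λ]. Then the correlation P satisfies the no-signalling condition from Alice to Bob (Σ_a P(a,b|x,y) is independent of x for all b, y) if and only if p(0) = p(1) = 1/2. -/
theorem otp_ns_iff_uniform_key {X Y : Type*} (g : X → Bool) (f : X → Y → Bool)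
    (hf : ∃ x x' y, f x y ≠ f x' y)
    (p : Bool → ℝ) (hp0 : ∀ l, 0 ≤ p l) (hp1 : p false + p true = 1)
    (P : Bool → Bool → X → Y → ℝ)
    (hP : ∀ a b x y, P a b x y =
      ∑ l : Bool, p l * (if a = xor (g x) l then (1:ℝ) else 0) *
        (if b = xor (f x y) l then (1:ℝ) else 0)) :
    (∀ b y x x', (∑ a : Bool, P a b x y) = ∑ a : Bool, P a b x' y) ↔
      (p false = 1/2 ∧ p true = 1/2) := by
  have hsum : ∀ b x y, (∑ a : Bool, P a b x y) = p (xor (f x y) b) := by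
    intro b x y
    simp only [hP, Fintype.sum_bool]
    cases hb : b <;> cases hfx : f x y <;> cases hg : g x <;> simp <;> ring
  constructor
  · intro hns
    obtain ⟨x, x', y, hxy⟩ := hf
    have h := hns false y x x'
    rw [hsum, hsum] at h
    have hne : f x y = !(f x' y) := by
      cases h1 : f x y <;> cases h2 : f x' y <;> simp_all
    rw [hne] at h
    have heq : p false = p true := by
      cases h2 : f x' y <;> simp [h2] at h <;> [exact h.symm; exact h]
    constructor <;> [nlinarith; nlinarith]
  · rintro ⟨h0, h1⟩ b y x x'
    rw [hsum, hsum]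
    cases h1 : xor (f x y) b <;> cases h2 : xor (f x' y) b <;> simp_all
end

section
/- Consider the noisy-ontic-signalling OTP box with correlation P(a,b|x,y) = (μ/2)·Σ_λ [a=λ]·[b = x·y ⊕ λ] + ((1−μ)/2)·Σ_λ [a=λ]·[b = (x⊕1)·y ⊕ λ]. In the standard 2→1 RAC protocol, conditioned on y = 0 Bob's guess equals x₀ with probability 1, and conditioned on y = 1 Bob's guess equals x₁ with probability μ; hence I₂ = 1 + (1 − h(μ)) = 2 − h(μ), which exceeds 1 whenever μ ≠ 1/2. -/
/-- Binary entropy in bits (with h(0)=h(1)=0, since `Real.logb 2 0 = 0`). -/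
noncomputable def binEnt (μ : ℝ) : ℝ :=
  -μ * Real.logb 2 μ - (1 - μ) * Real.logb 2 (1 - μ)

/-- Bob's guess in the RAC protocol with the noisy-ontic-signalling OTP box:
`e` is the ontic bit-flip error, `l` the key; Alice inputs x₀ ⊕ x₁,
b = ((x₀⊕x₁)⊕e)·y ⊕ l, and the guess is z = b ⊕ l ⊕ x₀. -/
def guess (x0 x1 e l y : Bool) : Bool :=
  xor (xor ((xor (xor x0 x1) e) && y) l) (xor l x0)

lemma binEnt_eq (μ : ℝ) : binEnt μ = Real.binEntropy μ / Real.log 2 := by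
  simp [binEnt, Real.binEntropy, Real.logb, Real.log_inv]
  ring

theorem noisy_ontic_rac (μ : ℝ) (hμ : μ ∈ Set.Icc (0:ℝ) 1) :
    (∀ x0 x1 : Bool,
      (∑ e : Bool, ∑ l : Bool, (if e then 1 - μ else μ) * (1/2 : ℝ) *
        (if guess x0 x1 e l false = x0 then 1 else 0)) = 1) ∧
    (∀ x0 x1 : Bool,
      (∑ e : Bool, ∑ l : Bool, (if e then 1 - μ else μ) * (1/2 : ℝ) *
        (if guess x0 x1 e l true = x1 then 1 else 0)) = μ) ∧
    1 + (1 - binEnt μ) = 2 - binEnt μ ∧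
    (μ ≠ 1/2 → 2 - binEnt μ > 1) := by
  refine ⟨?_, ?_, by ring, ?_⟩
  · intro x0 x1; fin_cases x0 <;> fin_cases x1 <;> simp [guess, Fin.sum_univ_succ] <;> ring
  · intro x0 x1; fin_cases x0 <;> fin_cases x1 <;> simp [guess, Fin.sum_univ_succ] <;> ring
  · intro h
    have h2 : Real.binEntropy μ < Real.log 2 := Real.binEntropy_lt_log_two.2 (by
      rw [show (2:ℝ)⁻¹ = 1/2 by norm_num]; exact h)
    have hlog : 0 < Real.log 2 := Real.log_pos (by norm_num)
    have : binEnt μ < 1 := by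
      rw [binEnt_eq, div_lt_one hlog]; exact h2
    linarith
end

section
/- Let h : X × Y → {0,1} with X, Y finite. The correlation P(a,b|x,y) = (1/2)·[a ⊕ b = h(x,y)] can be simulated using |Y| PR boxes and 0 bits of communication at the level of outcome structure: if for each i ∈ Y Alice inputs h(x, i) and Bob inputs [i = y] into the i-th PR box with outputs a_i, b_i, then setting a = XOR_i a_i and b = XOR_i b_i yields a ⊕ b = XOR_i (a_i ⊕ b_i) = XOR_i h(x,i)·[i = y] = h(x,y), and a, b are each uniformly distributed. -/
/-!
Summing the box relations `a i + b i = h x i * [i = y]` over `i` collapses the right-hand side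
to `h x y`. For uniformity, `a ↦ ∑ i, a i` is a surjective homomorphism `(Y → G) →+ G`, so all its
fibres have the same size `|G| ^ |Y| / |G|`; for `G = ZMod 2` the XOR of uniform bits is uniform.
-/

open Finset

theorem AddMonoidHom.card_fiber_mul_card_of_surjective {A G : Type*} [AddGroup A] [Fintype A]
    [AddMonoid G] [Fintype G] [DecidableEq G] (f : A →+ G) (hf : Function.Surjective f) (c : G) :
    #{a | f a = c} * Fintype.card G = Fintype.card A := by
  calc #{a | f a = c} * Fintype.card G = ∑ d : G, #{a | f a = d} := by
        rw [sum_congr rfl fun d _ => card_fiber_eq_of_mem_range f (hf d) (hf c), sum_const,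
          card_univ, smul_eq_mul, mul_comm]
    _ = Fintype.card A := (card_eq_sum_card_fiberwise fun a _ => mem_univ (f a)).symm

theorem card_fiber_sum_mul_card_eq_card_pow {Y G : Type*} [Fintype Y] [DecidableEq Y] [Nonempty Y]
    [AddCommGroup G] [Fintype G] [DecidableEq G] (c : G) :
    #{a : Y → G | ∑ i, a i = c} * Fintype.card G = Fintype.card G ^ Fintype.card Y := by
  let sumHom : (Y → G) →+ G := ∑ i, Pi.evalAddMonoidHom (fun _ => G) i
  have hsurj : Function.Surjective sumHom := fun d =>
    ⟨Pi.single (Classical.arbitrary Y) d, by simp [sumHom]⟩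
  simpa [sumHom, Fintype.card_fun] using sumHom.card_fiber_mul_card_of_surjective hsurj c

theorem pr_simulation_of_xor_boxes {X Y : Type*} [Fintype Y] [DecidableEq Y]
    (h : X → Y → ZMod 2) (x : X) (y : Y) :
    (∀ a b : Y → ZMod 2,
      (∀ i, a i + b i = h x i * (if i = y then 1 else 0)) →
        (∑ i, a i) + (∑ i, b i) = h x y) ∧
    (Nonempty Y → ∀ c : ZMod 2,
      (∑ a : Y → ZMod 2, ((1:ℝ)/2^(Fintype.card Y)) *
        (if (∑ i, a i) = c then 1 else 0)) = 1/2) := by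
  refine ⟨fun a b hab => ?_, fun _ c => ?_⟩
  · rw [← sum_add_distrib, sum_congr rfl fun i _ => hab i]
    simp
  · have hcard : (#{a : Y → ZMod 2 | ∑ i, a i = c} : ℝ) * 2 = 2 ^ Fintype.card Y := by
      exact_mod_cast card_fiber_sum_mul_card_eq_card_pow c
    rw [← mul_sum, sum_boole, eq_div_of_mul_eq two_ne_zero hcard]
    field_simp
end
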